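/- arXiv:0901.1506 — 2 statements merged into one kernel-verified Lean document; each statement's English description precedes it below -/
import Mathlib

section
/- For all a in the K-NilHecke ring and φ, ψ in Ψ, the pairing satisfies ⟨a, φψ⟩ = ⟨Δ(a), φ⊗ψ⟩; consequently, if Δ(T_w) = Σ_{u,v} c_w^{uv} T_u ⊗ T_v then ψ^u ψ^v = Σ_w c_w^{uv} ψ^w, i.e. the coproduct structure constants of the nilHecke ring equal the product structure constants of the Schubert basis ψ^v. -/
/-!
STATEMENT 12: For all `a` in the K-NilHecke ring `𝕂` and `φ, χ ∈ Ψ`, the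
pairing satisfies `⟨a, φχ⟩ = ⟨Δ(a), φ ⊗ χ⟩`; consequently, if
`Δ(T_w) = Σ_{u,v} c_w^{uv} T_u ⊗ T_v` then `ψ^u ψ^v = Σ_w c_w^{uv} ψ^w`,
i.e. the coproduct structure constants of the nilHecke ring are the product
structure constants of the Schubert basis `{ψ^v}`.

Setup as in the K-NilHecke framework (`F = Q(T)`, `R = R(T) ⊆ F`,
`T_i = (1-e^{α_i})⁻¹(r_i-1)`, `T_w`, the evaluation pairing `Pair`, and the
Schubert functions `ψ^v` with `⟨T_u, ψ^v⟩ = δ_{v,u}`).  `𝕂` consists of the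
finite `R(T)`-linear combinations of the `T_w` (the set `Kset`).  The pairing
`⟨·,·⟩ : (𝕂 ⊗_{R(T)} 𝕂) × (Ψ ⊗_{R(T)} Ψ) → R(T)` with
`⟨x ⊗ y, φ ⊗ χ⟩ = ⟨x,φ⟩⟨y,χ⟩` is encoded by the functional
`DP a φ χ = ⟨Δ(a), φ ⊗ χ⟩`, which is additive and left `Q(T)`-linear in `a`
and satisfies `⟨Δ(w), φ ⊗ χ⟩ = φ(w) χ(w)` (as `Δ(w) = w ⊗ w`); the expansion
`Δ(T_w) = Σ_{u,v} c_w^{uv} T_u ⊗ T_v` is encoded by the hypothesis `hc`.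
Products of functions `W → F` are pointwise, and `Σᶠ` denotes a finite sum.
-/
open scoped Classical

noncomputable section

/-- Left multiplication by `q : F` as an additive endomorphism of `F`. -/
def mulOp {F : Type*} [Field F] (q : F) : Module.End ℤ F :=
  (AddMonoidHom.mulLeft q).toIntLinearMap

/-- The action of a group element `w : W` on `F` as an additive endomorphism. -/
def grpOp {W F : Type*} [Field F] [Group W] [MulSemiringAction W F] (w : W) :
    Module.End ℤ F :=
  (DistribMulAction.toAddMonoidHom F w).toIntLinearMap

/-- The Demazure element `T = (1 - a)⁻¹ (w - 1)` (with `a = e^{α_i}`,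
`w = r_i`) as an operator on `F`. -/
def TOp {W F : Type*} [Field F] [Group W] [MulSemiringAction W F]
    (a : F) (w : W) : Module.End ℤ F :=
  mulOp (1 - a)⁻¹ * (grpOp w - 1)

/-- `T_ω = T_{i_1} ⋯ T_{i_N}` for a word `ω = (i_1, …, i_N)`. -/
def Tword {B W F : Type*} [Field F] [Group W] [MulSemiringAction W F]
    {M : CoxeterMatrix B} (cs : CoxeterSystem M W) (a : B → F) (ω : List B) :
    Module.End ℤ F :=
  (ω.map (fun i => TOp (a i) (cs.simple i))).prod

/-- `𝕂 = ⊕_{w} R(T) T_w`: finite `R`-linear combinations of the `T_w`. -/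
def Kset {W F : Type*} [Field F] (R : Subring F)
    (Tw : W → Module.End ℤ F) : Set (Module.End ℤ F) :=
  {x | ∃ d : W →₀ F, (∀ w, d w ∈ R) ∧
    x = ∑ w ∈ d.support, mulOp (d w) * Tw w}

/-! With `F` acting on `End_ℤ(F)` by left multiplication, the `F`-spans of the Demazure
operators `T_w` and of the group elements `w` coincide. Expanding `T_{i_1} ⋯ T_{i_N}` writes each
`T_w` through group elements; conversely `r_i = (1 - e^{α_i}) T_i + 1` and `T_i T_w ∈ {T_{r_i w}, μ T_w}`
write each `w` through the `T_w`. Here `e^{α_i} ≠ 1`, since otherwise `T_{r_i} = 0`, contradicting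
`⟨T_{r_i}, ψ^{r_i}⟩ = 1`.

Both sides of (i) are `F`-linear in `a` and equal `φ(w) χ(w)` on group elements. For (ii), expand
`x = Σ q_w T_w`: duality gives `q_w = ψ^w(x)`, so `ψ^u(x) ψ^v(x) = ⟨Δ x, ψ^u ⊗ ψ^v⟩ = Σ_w ψ^w(x) c_w^{uv}`.
-/

open Set
open Submodule (span subset_span span_le smul_mem)

lemma Submodule.mul_mem_span_range_of_forall {R A ι κ : Type*} [Semiring R] [Semiring A]
    [Module R A] {v : ι → A} {u : κ → A} (y : A)
    (h : ∀ (q : R) (i : ι), y * (q • v i) ∈ span R (range u)) {z : A}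
    (hz : z ∈ span R (range v)) : y * z ∈ span R (range u) := by
  induction hz using Submodule.closure_induction with
  | zero => simp
  | add x x' _ _ hx hx' => rw [mul_add]; exact add_mem hx hx'
  | smul_mem q x hx => obtain ⟨i, rfl⟩ := hx; exact h q i

lemma LinearMap.apply_eq_finsum_of_mem_span {R M ι : Type*} [CommSemiring R] [AddCommMonoid M]
    [Module R M] {v : ι → M} {e : ι → M →ₗ[R] R}
    (he : ∀ i j, e i (v j) = if i = j then 1 else 0) (f : M →ₗ[R] R) {z : M}
    (hz : z ∈ span R (Set.range v)) : f z = ∑ᶠ i, f (v i) * e i z := by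
  classical
  obtain ⟨c, rfl⟩ := Finsupp.mem_span_range_iff_exists_finsupp.mp hz
  have hec : ∀ i, e i (c.sum fun j r => r • v j) = c i := by
    intro i
    simp [Finsupp.sum, map_sum, he, eq_comm (a := (0 : R))]
  simp_rw [hec]
  rw [finsum_eq_sum_of_support_subset _ (s := c.support) ?_]
  · simp [Finsupp.sum, map_sum, mul_comm]
  · intro i hi
    simpa using right_ne_zero_of_mul hi

lemma finsum_mul_ite_mul_ite {α β R : Type*} [Semiring R] [DecidableEq α] [DecidableEq β]
    (g : α × β → R) (a : α) (b : β) :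
    ∑ᶠ p : α × β, g p * (if a = p.1 then 1 else 0) * (if b = p.2 then 1 else 0) = g (a, b) := by
  rw [finsum_eq_single _ (a, b)]
  · simp
  · rintro ⟨x, y⟩ hxy
    rcases not_and_or.mp (mt Prod.ext_iff.mpr hxy) with h | h <;> simp [Ne.symm h]

lemma Kset_subset_span {W F : Type*} [Field F] (R : Subring F) (Tw : W → Module.End ℤ F) :
    Kset R Tw ⊆ span F (range Tw) := by
  rintro x ⟨d, -, rfl⟩
  exact sum_mem fun w _ => smul_mem _ _ (subset_span ⟨w, rfl⟩)

section Operators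

variable {W F : Type*} [Field F] [Group W] [MulSemiringAction W F]

@[simp] lemma grpOp_apply (g : W) (x : F) : grpOp g x = g • x := rfl

lemma grpOp_one : grpOp (1 : W) = (1 : Module.End ℤ F) := by
  ext x; simp

lemma grpOp_mul (g h : W) : grpOp (g * h) = (grpOp g * grpOp h : Module.End ℤ F) := by
  ext x; simp [mul_smul]

lemma grpOp_mul_smul (g : W) (q : F) (x : Module.End ℤ F) :
    grpOp g * (q • x) = (g • q) • (grpOp g * x) := by
  ext y; simp [smul_mul']

lemma TOp_eq_smul (a : F) (t : W) : TOp a t = (1 - a)⁻¹ • (grpOp t - 1) := rfl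

lemma TOp_one_left (t : W) : TOp (1 : F) t = 0 := by
  simp [TOp_eq_smul]

lemma grpOp_eq_smul_TOp_add_one {a : F} (ha : a ≠ 1) (t : W) :
    grpOp t = (1 - a) • TOp a t + 1 := by
  rw [TOp_eq_smul, smul_smul, mul_inv_cancel₀ (sub_ne_zero.mpr ha.symm), one_smul,
    sub_add_cancel]

lemma TOp_mul_smul (a q : F) (t : W) (x : Module.End ℤ F) :
    TOp a t * (q • x) = (t • q) • (TOp a t * x) + ((1 - a)⁻¹ * (t • q - q)) • x := by
  ext y
  simp only [TOp_eq_smul, Module.End.mul_apply, LinearMap.smul_apply, smul_eq_mul,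
    LinearMap.sub_apply, grpOp_apply, smul_mul', Module.End.one_apply, LinearMap.add_apply]
  ring

lemma TOp_mul_self (a : F) {t : W} (ht : t * t = 1) :
    TOp a t * TOp a t = (-(t • (1 - a)⁻¹ + (1 - a)⁻¹)) • TOp a t := by
  ext y
  simp only [TOp_eq_smul, smul_sub, Module.End.mul_apply, LinearMap.sub_apply,
    LinearMap.smul_apply, grpOp_apply, smul_eq_mul, Module.End.one_apply, smul_mul', smul_inv₀',
    smul_one, ← mul_smul, ht, one_smul]
  ring

lemma grpOp_mul_mem_span_grpOp (g : W) {z : Module.End ℤ F}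
    (hz : z ∈ span F (range (grpOp (W := W)))) : grpOp g * z ∈ span F (range (grpOp (W := W))) :=
  Submodule.mul_mem_span_range_of_forall _ (fun q h => by
    rw [grpOp_mul_smul, ← grpOp_mul]
    exact smul_mem _ _ (subset_span ⟨_, rfl⟩)) hz

lemma TOp_mul_mem_span_grpOp (a : F) (t : W) {z : Module.End ℤ F}
    (hz : z ∈ span F (range (grpOp (W := W)))) : TOp a t * z ∈ span F (range (grpOp (W := W))) := by
  rw [TOp_eq_smul, smul_mul_assoc, sub_mul, one_mul]
  exact smul_mem _ _ (sub_mem (grpOp_mul_mem_span_grpOp t hz) hz)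

lemma Tword_mem_span_grpOp {B : Type*} {M : CoxeterMatrix B} (cs : CoxeterSystem M W)
    (a : B → F) (ω : List B) : Tword cs a ω ∈ span F (range (grpOp (W := W))) := by
  induction ω with
  | nil => exact subset_span ⟨1, grpOp_one⟩
  | cons i ω ih =>
    simp only [Tword, List.map_cons, List.prod_cons] at ih ⊢
    exact TOp_mul_mem_span_grpOp _ _ ih

end Operators

section NilHecke

variable {B W F : Type*} [Field F] [Group W] [MulSemiringAction W F] {M : CoxeterMatrix B}
  {cs : CoxeterSystem M W} {a : B → F} {Tw : W → Module.End ℤ F}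

lemma Tw_mem_span_grpOp (hTw : ∀ ω, cs.IsReduced ω → Tw (cs.wordProd ω) = Tword cs a ω)
    (w : W) : Tw w ∈ span F (range (grpOp (W := W))) := by
  obtain ⟨ω, hω, rfl⟩ := cs.exists_isReduced w
  rw [hTw ω hω]
  exact Tword_mem_span_grpOp cs a ω

lemma Tw_one (hTw : ∀ ω, cs.IsReduced ω → Tw (cs.wordProd ω) = Tword cs a ω) : Tw 1 = 1 := by
  simpa [Tword] using hTw [] (by simp [CoxeterSystem.IsReduced])

lemma ne_one_of_Tw_simple_ne_zero
    (hTw : ∀ ω, cs.IsReduced ω → Tw (cs.wordProd ω) = Tword cs a ω) {i : B}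
    (h : Tw (cs.simple i) ≠ 0) : a i ≠ 1 := by
  rintro hi
  apply h
  simpa [Tword, hi, TOp_one_left] using hTw [i] (by simp [CoxeterSystem.IsReduced])

lemma TOp_mul_Tw_of_length_simple_mul
    (hTw : ∀ ω, cs.IsReduced ω → Tw (cs.wordProd ω) = Tword cs a ω) {i : B} {w : W}
    (h : cs.length (cs.simple i * w) = cs.length w + 1) :
    TOp (a i) (cs.simple i) * Tw w = Tw (cs.simple i * w) := by
  obtain ⟨ω, hω, rfl⟩ := cs.exists_isReduced w
  have hiω : cs.IsReduced (i :: ω) := by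
    rw [CoxeterSystem.IsReduced, cs.wordProd_cons, h, hω.eq, List.length_cons]
  rw [← cs.wordProd_cons, hTw _ hiω, hTw _ hω]
  simp [Tword]

lemma TOp_mul_Tw_mem_span (hTw : ∀ ω, cs.IsReduced ω → Tw (cs.wordProd ω) = Tword cs a ω)
    (i : B) (w : W) : TOp (a i) (cs.simple i) * Tw w ∈ span F (range Tw) := by
  rcases cs.length_simple_mul w i with h | h
  · rw [TOp_mul_Tw_of_length_simple_mul hTw h]
    exact subset_span ⟨_, rfl⟩
  · -- `w = r_i w'` with `w' = r_i w` ascending, and `T_i² = μ T_i`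
    have hw : cs.simple i * (cs.simple i * w) = w := cs.simple_mul_simple_cancel_left i
    have hTw' := TOp_mul_Tw_of_length_simple_mul hTw (w := cs.simple i * w) (by rw [hw]; omega)
    rw [hw] at hTw'
    rw [← hTw', ← mul_assoc, TOp_mul_self _ (cs.simple_mul_simple_self i), smul_mul_assoc, hTw']
    exact smul_mem _ _ (subset_span ⟨_, rfl⟩)

lemma TOp_mul_mem_span_Tw (hTw : ∀ ω, cs.IsReduced ω → Tw (cs.wordProd ω) = Tword cs a ω)
    (i : B) {z : Module.End ℤ F} (hz : z ∈ span F (range Tw)) :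
    TOp (a i) (cs.simple i) * z ∈ span F (range Tw) :=
  Submodule.mul_mem_span_range_of_forall _ (fun q w => by
    rw [TOp_mul_smul]
    exact add_mem (smul_mem _ _ (TOp_mul_Tw_mem_span hTw i w))
      (smul_mem _ _ (subset_span ⟨w, rfl⟩))) hz

lemma grpOp_mem_span_Tw (hTw : ∀ ω, cs.IsReduced ω → Tw (cs.wordProd ω) = Tword cs a ω)
    (ha : ∀ i, a i ≠ 1) (x : W) : grpOp x ∈ span F (range Tw) := by
  induction x using cs.simple_induction_left with
  | one =>
    rw [grpOp_one, ← Tw_one hTw]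
    exact subset_span ⟨1, rfl⟩
  | mul_simple_left w i ih =>
    rw [grpOp_mul, grpOp_eq_smul_TOp_add_one (ha i), add_mul, one_mul, smul_mul_assoc]
    exact add_mem (smul_mem _ _ (TOp_mul_mem_span_Tw hTw i ih)) ih

end NilHecke

theorem pairing_coproduct_and_structure_constants_general
    {B W F : Type*} [Field F] [Group W] [MulSemiringAction W F]
    {M : CoxeterMatrix B} (cs : CoxeterSystem M W) (a : B → F)
    (R : Subring F)
    (Tw : W → Module.End ℤ F)
    (hTw : ∀ ω : List B, cs.IsReduced ω → Tw (cs.wordProd ω) = Tword cs a ω)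
    (Pair : Module.End ℤ F → (W → F) → F)
    (hPadd : ∀ x y φ, Pair (x + y) φ = Pair x φ + Pair y φ)
    (hPmul : ∀ (q : F) x φ, Pair (mulOp q * x) φ = q * Pair x φ)
    (hPgrp : ∀ (w : W) (φ : W → F), Pair (grpOp w) φ = φ w)
    (ψ : W → W → F)
    (hψ : ∀ v u : W, Pair (Tw u) (ψ v) = if v = u then 1 else 0)
    -- `DP a φ χ` encodes `⟨Δ(a), φ ⊗ χ⟩`:
    (DP : Module.End ℤ F → (W → F) → (W → F) → F)
    (hDPadd : ∀ x y φ χ, DP (x + y) φ χ = DP x φ χ + DP y φ χ)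
    (hDPmul : ∀ (q : F) x φ χ, DP (mulOp q * x) φ χ = q * DP x φ χ)
    (hDPgrp : ∀ (w : W) (φ χ : W → F), DP (grpOp w) φ χ = φ w * χ w)
    -- the structure constants `c_w^{uv}`, with `Δ(T_w) = Σ_{u,v} c_w^{uv} T_u ⊗ T_v`:
    (c : W → W → W → F)
    (hc : ∀ (w : W) (φ χ : W → F),
      DP (Tw w) φ χ = ∑ᶠ p : W × W, c w p.1 p.2 * Pair (Tw p.1) φ * Pair (Tw p.2) χ) :
    -- (i) `⟨a, φ χ⟩ = ⟨Δ(a), φ ⊗ χ⟩` for all `a ∈ 𝕂` and `φ, χ ∈ Ψ`: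
    (∀ x ∈ Kset R Tw, ∀ φ χ : W → F,
      (∀ w, Pair (Tw w) φ ∈ R) → (∀ w, Pair (Tw w) χ ∈ R) →
      Pair x (fun w => φ w * χ w) = DP x φ χ) ∧
    -- (ii) `ψ^u ψ^v = Σ_w c_w^{uv} ψ^w`:
    (∀ u v x : W, ψ u x * ψ v x = ∑ᶠ w : W, c w u v * ψ w x) := by
  -- `mulOp q * x` is definitionally `q • x`, so `hPmul` and `hDPmul` are `F`-linearity.
  let P (φ : W → F) : Module.End ℤ F →ₗ[F] F := ⟨⟨(Pair · φ), (hPadd · · φ)⟩, (hPmul · · φ)⟩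
  let D (φ χ : W → F) : Module.End ℤ F →ₗ[F] F :=
    ⟨⟨(DP · φ χ), (hDPadd · · φ χ)⟩, (hDPmul · · φ χ)⟩
  have hdual : ∀ v u, P (ψ v) (Tw u) = if v = u then 1 else 0 := hψ
  have ha : ∀ i, a i ≠ 1 := fun i => ne_one_of_Tw_simple_ne_zero hTw fun h0 => by
    simpa [h0] using hdual (cs.simple i) (cs.simple i)
  refine ⟨fun x hx φ χ _ _ => ?_, fun u v x => ?_⟩
  · have hx' : x ∈ span F (range grpOp) :=
      span_le.mpr (range_subset_iff.mpr (Tw_mem_span_grpOp hTw)) (Kset_subset_span R Tw hx)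
    refine LinearMap.eqOn_span' (f := P _) (g := D φ χ) ?_ hx'
    rintro _ ⟨g, rfl⟩
    exact (hPgrp g _).trans (hDPgrp g φ χ).symm
  · have hcoeff : ∀ w, D (ψ u) (ψ v) (Tw w) = c w u v := fun w => by
      show DP (Tw w) (ψ u) (ψ v) = c w u v
      simp_rw [hc, hψ]
      exact finsum_mul_ite_mul_ite (fun p => c w p.1 p.2) u v
    calc ψ u x * ψ v x = D (ψ u) (ψ v) (grpOp x) := (hDPgrp x _ _).symm
      _ = ∑ᶠ w, D (ψ u) (ψ v) (Tw w) * P (ψ w) (grpOp x) :=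
        LinearMap.apply_eq_finsum_of_mem_span hdual _ (grpOp_mem_span_Tw hTw ha x)
      _ = ∑ᶠ w, c w u v * ψ w x := by
        simp_rw [hcoeff]
        exact finsum_congr fun w => congrArg _ (hPgrp x (ψ w))

theorem pairing_coproduct_and_structure_constants
    {B W F : Type*} [Field F] [Group W] [MulSemiringAction W F]
    {M : CoxeterMatrix B} (cs : CoxeterSystem M W) (a : B → F)
    (R : Subring F)
    (Tw : W → Module.End ℤ F)
    (hTw : ∀ ω : List B, cs.IsReduced ω → Tw (cs.wordProd ω) = Tword cs a ω)
    (Pair : Module.End ℤ F → (W → F) → F)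
    (hPadd : ∀ x y φ, Pair (x + y) φ = Pair x φ + Pair y φ)
    (hPmul : ∀ (q : F) x φ, Pair (mulOp q * x) φ = q * Pair x φ)
    (hPgrp : ∀ (w : W) (φ : W → F), Pair (grpOp w) φ = φ w)
    (ψ : W → W → F)
    (hψ : ∀ v u : W, Pair (Tw u) (ψ v) = if v = u then 1 else 0)
    (hψfin : ∀ x : W, {u : W | ψ u x ≠ 0}.Finite)
    -- `DP a φ χ` encodes `⟨Δ(a), φ ⊗ χ⟩`:
    (DP : Module.End ℤ F → (W → F) → (W → F) → F)
    (hDPadd : ∀ x y φ χ, DP (x + y) φ χ = DP x φ χ + DP y φ χ)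
    (hDPmul : ∀ (q : F) x φ χ, DP (mulOp q * x) φ χ = q * DP x φ χ)
    (hDPgrp : ∀ (w : W) (φ χ : W → F), DP (grpOp w) φ χ = φ w * χ w)
    -- the structure constants `c_w^{uv}`, with `Δ(T_w) = Σ_{u,v} c_w^{uv} T_u ⊗ T_v`:
    (c : W → W → W → F)
    (hcfin : ∀ w : W, {p : W × W | c w p.1 p.2 ≠ 0}.Finite)
    (hc : ∀ (w : W) (φ χ : W → F),
      DP (Tw w) φ χ = ∑ᶠ p : W × W, c w p.1 p.2 * Pair (Tw p.1) φ * Pair (Tw p.2) χ) :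
    -- (i) `⟨a, φ χ⟩ = ⟨Δ(a), φ ⊗ χ⟩` for all `a ∈ 𝕂` and `φ, χ ∈ Ψ`:
    (∀ x ∈ Kset R Tw, ∀ φ χ : W → F,
      (∀ w, Pair (Tw w) φ ∈ R) → (∀ w, Pair (Tw w) χ ∈ R) →
      Pair x (fun w => φ w * χ w) = DP x φ χ) ∧
    -- (ii) `ψ^u ψ^v = Σ_w c_w^{uv} ψ^w`:
    (∀ u v x : W, ψ u x * ψ v x = ∑ᶠ w : W, c w u v * ψ w x) :=
  pairing_coproduct_and_structure_constants_general cs a R Tw hTw Pair hPadd hPmul hPgrp ψ hψ DP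
    hDPadd hDPmul hDPgrp c hc
end
end

section
/- For the affine Weyl group of type A_{n-1}^{(1)}, if a, b ∈ K_0 are such that a and b each commute with φ_0 in the sense of membership in L_0, and λ, μ ∈ P satisfy φ_0(a e^λ) = a and φ_0(a e^μ) = a, then φ_0(a e^{λ+μ}) = a. -/
/-!
Write `K` for the `R`-span of the `T_w`. Right multiplication by `e^λ` maps `K` to itself, and
on coefficient vectors it is `R`-linear. Since the augmentation is a ring map fixing `ℤ`, `φ₀` is
compatible with it: `φ₀(x e^μ) = φ₀(φ₀(x) e^μ)` for every `x ∈ K`. Applied to `x = a e^λ`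
this gives `φ₀(a e^{λ+μ}) = φ₀(φ₀(a e^λ) e^μ) = φ₀(a e^μ) = a`.
-/

open scoped Classical

noncomputable section

/-- The affine 0-Hecke algebra `𝕂₀ = ⊕_w ℤ T_w`. -/
def K0set {W F : Type*} [Field F]
    (Tw : W → Module.End ℤ F) : Set (Module.End ℤ F) :=
  {x | ∃ d : W →₀ ℤ, x = ∑ w ∈ d.support, d w • Tw w}

end

open Finsupp

section LinearCombination

variable {R E ι κ : Type*} [Semiring R]

theorem mapRange_linearCombination_mapRange_of_idempotent (ε : R →+* R)
    (hε : ∀ r, ε (ε r) = ε r) (c : ι → κ →₀ R) (d : ι →₀ R) :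
    mapRange ε (map_zero ε) (linearCombination R c (mapRange ε (map_zero ε) d)) =
      mapRange ε (map_zero ε) (linearCombination R c d) := by
  induction d using Finsupp.induction_linear with
  | zero => simp
  | add d₁ d₂ h₁ h₂ => simp only [mapRange_add (map_add ε), map_add, h₁, h₂]
  | single w r => ext v; simp [hε]

variable [Semiring E] [Module R E] [IsScalarTower R E E] (v : ι → E)

theorem linearCombination_mul {M : E} {c : ι → ι →₀ R}
    (hc : ∀ i, v i * M = linearCombination R v (c i)) (d : ι →₀ R) :
    linearCombination R v d * M = linearCombination R v (linearCombination R c d) := by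
  rw [linearCombination_linearCombination, ← funext hc]
  simp only [linearCombination_apply, Finsupp.sum_mul, smul_mul_assoc]

theorem mul_mem_range_linearCombination {M X : E}
    (hM : ∀ i, v i * M ∈ LinearMap.range (linearCombination R v))
    (hX : X ∈ LinearMap.range (linearCombination R v)) :
    X * M ∈ LinearMap.range (linearCombination R v) := by
  choose c hc using hM
  obtain ⟨d, rfl⟩ := hX
  exact ⟨linearCombination R c d, (linearCombination_mul v (fun i => (hc i).symm) d).symm⟩

theorem map_mul_eq_map_map_mul_of_idempotent {φ : E → E} (ε : R →+* R)
    (hε : ∀ r, ε (ε r) = ε r)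
    (hφ : ∀ d, φ (linearCombination R v d) = linearCombination R v (mapRange ε (map_zero ε) d))
    {M X : E} (hM : ∀ i, v i * M ∈ LinearMap.range (linearCombination R v))
    (hX : X ∈ LinearMap.range (linearCombination R v)) :
    φ (X * M) = φ (φ X * M) := by
  choose c hc using hM
  obtain ⟨d, rfl⟩ := hX
  have hmul := linearCombination_mul v (fun i => (hc i).symm)
  rw [hφ, hmul, hmul, hφ, hφ, mapRange_linearCombination_mapRange_of_idempotent ε hε]

end LinearCombination

section NilHecke

variable {F : Type*} [Field F]

theorem mulOp_mul (x y : F) : mulOp (x * y) = mulOp x * mulOp y := by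
  ext z
  exact mul_assoc x y z

variable {R : Subring F} {Wa : Type*} (Tw : Wa → Module.End ℤ F)

theorem sum_mulOp_mul_eq_linearCombination (d : Wa →₀ R) :
    ∑ w ∈ d.support, mulOp ((d w : R) : F) * Tw w = linearCombination R Tw d := by
  rw [linearCombination_apply, Finsupp.sum]
  rfl

theorem sum_zsmul_eq_linearCombination (ε : R →+* ℤ) (d : Wa →₀ R) :
    ∑ w ∈ d.support, ε (d w) • Tw w =
      linearCombination R Tw (mapRange ((Int.castRingHom R).comp ε) (map_zero _) d) := by
  rw [linearCombination_apply, sum_mapRange_index (by simp), Finsupp.sum]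
  simp only [RingHom.coe_comp, Function.comp_apply, eq_intCast, Int.cast_smul_eq_zsmul]

theorem K0set_subset_range_linearCombination :
    K0set Tw ⊆ LinearMap.range (linearCombination R Tw) := by
  rintro _ ⟨n, rfl⟩
  refine ⟨mapRange (Int.castRingHom R) (map_zero _) n, ?_⟩
  rw [linearCombination_apply, sum_mapRange_index (by simp), Finsupp.sum]
  simp only [eq_intCast, Int.cast_smul_eq_zsmul]

end NilHecke

theorem phi0_exponential_additivity_general
    {Wa P F : Type*} [Field F]
    [AddCommGroup P]
    (Tw : Wa → Module.End ℤ F)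
    (R : Subring F)
    (e : P → R) (he : ∀ lam mu : P, e (lam + mu) = e lam * e mu)
    (aug : R →+* ℤ)
    (hclose : ∀ (w : Wa) (q : R), ∃ d : Wa →₀ R,
      Tw w * mulOp (q : F) = ∑ v ∈ d.support, mulOp ((d v : R) : F) * Tw v)
    (φ0 : Module.End ℤ F → Module.End ℤ F)
    (hφ0 : ∀ d : Wa →₀ R,
      φ0 (∑ w ∈ d.support, mulOp ((d w : R) : F) * Tw w)
        = ∑ w ∈ d.support, (aug (d w)) • Tw w)
    (A : Module.End ℤ F) (hA : A ∈ K0set Tw)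
    (lam mu : P)
    (hlam : φ0 (A * mulOp ((e lam : R) : F)) = A)
    (hmu : φ0 (A * mulOp ((e mu : R) : F)) = A) :
    φ0 (A * mulOp ((e (lam + mu) : R) : F)) = A := by
  set ε := (Int.castRingHom R).comp aug
  have hε : ∀ r, ε (ε r) = ε r := by simp [ε]
  have hφ0_lc : ∀ d, φ0 (linearCombination R Tw d) =
      linearCombination R Tw (mapRange ε (map_zero ε) d) := by
    intro d
    rw [← sum_mulOp_mul_eq_linearCombination, hφ0, sum_zsmul_eq_linearCombination]
  have hclose_mem : ∀ (q : R) w,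
      Tw w * mulOp (q : F) ∈ LinearMap.range (linearCombination R Tw) :=
    fun q w => (hclose w q).imp fun d hd => by rw [hd, sum_mulOp_mul_eq_linearCombination]
  have hAK := K0set_subset_range_linearCombination (R := R) Tw hA
  calc φ0 (A * mulOp ((e (lam + mu) : R) : F))
      = φ0 (A * mulOp ((e lam : R) : F) * mulOp ((e mu : R) : F)) := by
        rw [he, Subring.coe_mul, mulOp_mul, mul_assoc]
    _ = φ0 (φ0 (A * mulOp ((e lam : R) : F)) * mulOp ((e mu : R) : F)) :=
        map_mul_eq_map_map_mul_of_idempotent Tw ε hε hφ0_lc (hclose_mem _)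
          (mul_mem_range_linearCombination Tw (hclose_mem _) hAK)
    _ = A := by rw [hlam, hmu]

theorem phi0_exponential_additivity
    {B Wa P F : Type*} [Field F] [Group Wa] [MulSemiringAction Wa F]
    [AddCommGroup P]
    {M : CoxeterMatrix B} (cs : CoxeterSystem M Wa) (a : B → F)
    (Tw : Wa → Module.End ℤ F)
    (hTw : ∀ ω : List B, cs.IsReduced ω → Tw (cs.wordProd ω) = Tword cs a ω)
    (R : Subring F)
    (e : P → R) (he : ∀ lam mu : P, e (lam + mu) = e lam * e mu)
    (aug : R →+* ℤ) (haug : ∀ lam : P, aug (e lam) = 1)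
    (hclose : ∀ (w : Wa) (q : R), ∃ d : Wa →₀ R,
      Tw w * mulOp (q : F) = ∑ v ∈ d.support, mulOp ((d v : R) : F) * Tw v)
    (hindep : ∀ d : Wa →₀ F,
      ∑ w ∈ d.support, mulOp (d w) * Tw w = 0 → d = 0)
    (φ0 : Module.End ℤ F → Module.End ℤ F)
    (hφ0 : ∀ d : Wa →₀ R,
      φ0 (∑ w ∈ d.support, mulOp ((d w : R) : F) * Tw w)
        = ∑ w ∈ d.support, (aug (d w)) • Tw w)
    (A : Module.End ℤ F) (hA : A ∈ K0set Tw)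
    (lam mu : P)
    (hlam : φ0 (A * mulOp ((e lam : R) : F)) = A)
    (hmu : φ0 (A * mulOp ((e mu : R) : F)) = A) :
    φ0 (A * mulOp ((e (lam + mu) : R) : F)) = A :=
  phi0_exponential_additivity_general Tw R e he aug hclose φ0 hφ0 A hA lam mu hlam hmu
end
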